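/- Let G' be a finite simple graph with an automorphism γ' satisfying γ'³ = id and γ'(u) ≠ u for every vertex u, and suppose G' has a (C₃,γ') 3Tree2 partition. Let G be a (C₃,γ') edge split of G' by new vertices v,w,z (on distinct base vertices v₁,v₂,v₃ ∈ V(G') with {v₁,v₂} ∈ E(G')), and let γ be the automorphism of G that restricts to γ' on V(G') and acts as the 3-cycle (v w z) on {v,w,z}. Then G has a (C₃,γ) 3Tree2 partition. -/

import Mathlib

open Matrix

noncomputable section

namespace C3Laman

variable {V : Type*} [Fintype V] [DecidableEq V]

/-- A 3Tree2 partition of `G`: three subtrees of `G` such that every edge of `G` lies in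
exactly one of them, and every vertex of `G` lies in exactly two of them. -/
def Is3Tree2Partition (G : SimpleGraph V) (T : Fin 3 → G.Subgraph) : Prop :=
  (∀ i, (T i).coe.IsTree) ∧
  (∀ e ∈ G.edgeSet, ∃! i : Fin 3, e ∈ (T i).edgeSet) ∧
  ∀ v : V, ({i : Fin 3 | v ∈ (T i).verts}).ncard = 2

/-- A proper 3Tree2 partition: no non-trivial subtrees of distinct trees have the same
vertex set. -/
def IsProper3Tree2Partition (G : SimpleGraph V) (T : Fin 3 → G.Subgraph) : Prop :=
  Is3Tree2Partition G T ∧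
  ∀ i j : Fin 3, i ≠ j → ∀ Si Sj : G.Subgraph, Si ≤ T i → Sj ≤ T j →
    Si.coe.IsTree → Sj.coe.IsTree →
    2 ≤ Si.verts.ncard → 2 ≤ Sj.verts.ncard → Si.verts ≠ Sj.verts

/-- A `(C₃, γ)` 3Tree2 partition: a 3Tree2 partition with `γ(Tᵢ) = T_{i+1}` (mod 3). -/
def IsC3_3Tree2Partition (G : SimpleGraph V) (γ : G ≃g G) (T : Fin 3 → G.Subgraph) : Prop :=
  Is3Tree2Partition G T ∧ ∀ i : Fin 3, (T i).map γ.toHom = T (i + 1)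

/-- A `(C₃, γ')` edge split of `G'` on distinct base vertices `v₁, v₂, v₃` (where
`{v₁, v₂} ∈ E(G')`), realized on the vertex type `V ⊕ Fin 3` with the three new
vertices `v = Sum.inr 0, w = Sum.inr 1, z = Sum.inr 2`:  the edges `{v₁,v₂}`,
`{γ'v₁,γ'v₂}`, `{γ'²v₁,γ'²v₂}` are deleted and the nine edges from the new vertices
are added. -/
def edgeSplitGraph (G' : SimpleGraph V) (γ' : G' ≃g G') (v₁ v₂ v₃ : V) :
    SimpleGraph (V ⊕ Fin 3) :=
  SimpleGraph.fromEdgeSet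
    (Sym2.map Sum.inl ''
        (G'.edgeSet \ {s(v₁, v₂), s(γ' v₁, γ' v₂), s(γ' (γ' v₁), γ' (γ' v₂))}) ∪
      {s((Sum.inr 0 : V ⊕ Fin 3), Sum.inl v₁), s((Sum.inr 0 : V ⊕ Fin 3), Sum.inl v₂),
       s((Sum.inr 0 : V ⊕ Fin 3), Sum.inl v₃),
       s((Sum.inr 1 : V ⊕ Fin 3), Sum.inl (γ' v₁)),
       s((Sum.inr 1 : V ⊕ Fin 3), Sum.inl (γ' v₂)),
       s((Sum.inr 1 : V ⊕ Fin 3), Sum.inl (γ' v₃)),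
       s((Sum.inr 2 : V ⊕ Fin 3), Sum.inl (γ' (γ' v₁))),
       s((Sum.inr 2 : V ⊕ Fin 3), Sum.inl (γ' (γ' v₂))),
       s((Sum.inr 2 : V ⊕ Fin 3), Sum.inl (γ' (γ' v₃)))})

-- auxiliary lemmas

private lemma reach_map {α β : Type*} {A : SimpleGraph α} {B : SimpleGraph β} (f : α → β)
    (h : ∀ a b, A.Adj a b → B.Reachable (f a) (f b)) {x y : α} (hxy : A.Reachable x y) :
    B.Reachable (f x) (f y) := by
  obtain ⟨w⟩ := hxy
  induction w with
  | nil => exact SimpleGraph.Reachable.refl _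
  | cons ha _ ih => exact (h _ _ ha).trans ih

private lemma mem_map_inl {α β : Type*} {S : Set (Sym2 α)} {a b : α ⊕ β} :
    s(a, b) ∈ Sym2.map Sum.inl '' S ↔ ∃ x y, s(x, y) ∈ S ∧ a = Sum.inl x ∧ b = Sum.inl y := by
  constructor
  · rintro ⟨e, he, hmap⟩
    induction e using Sym2.ind with
    | _ x y =>
      rw [Sym2.map_pair_eq, Sym2.eq_iff] at hmap
      rcases hmap with ⟨rfl, rfl⟩ | ⟨rfl, rfl⟩
      · exact ⟨x, y, he, rfl, rfl⟩
      · exact ⟨y, x, by rwa [Sym2.eq_swap] at he, rfl, rfl⟩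
  · rintro ⟨x, y, h, rfl, rfl⟩
    exact ⟨s(x, y), h, by rw [Sym2.map_pair_eq]⟩

private lemma sym2_congr_inj {α β : Type*} {f : α → β} (hf : Function.Injective f)
    {x y x' y' : α} (h : s(f x, f y) = s(f x', f y')) : s(x, y) = s(x', y') :=
  Sym2.map.injective hf (by rw [Sym2.map_pair_eq, Sym2.map_pair_eq]; exact h)

private lemma subtype_sym2_eq {α : Type*} {p : α → Prop} {a b c d : Subtype p}
    (h : s(a.1, b.1) = s(c.1, d.1)) : s(a, b) = s(c, d) :=
  sym2_congr_inj Subtype.val_injective h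

def qq {V : Type*} {G' : SimpleGraph V} (γ' : G' ≃g G') (m : Fin 3) (x : V) : V :=
  (fun y => γ' y)^[m.val] x

def Everts {V : Type*} {G' : SimpleGraph V} (T : Fin 3 → G'.Subgraph) (i₀ k j : Fin 3) :
    Set (V ⊕ Fin 3) :=
  Sum.inl '' (T j).verts ∪ {Sum.inr (j - i₀), Sum.inr (j - k)}

def Eedges {V : Type*} {G' : SimpleGraph V} (γ' : G' ≃g G') (T : Fin 3 → G'.Subgraph)
    (v₁ v₂ v₃ : V) (i₀ k j : Fin 3) : Set (Sym2 (V ⊕ Fin 3)) :=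
  Sym2.map Sum.inl ''
      ((T j).edgeSet \ {s(qq γ' (j - i₀) v₁, qq γ' (j - i₀) v₂)}) ∪
    {s(Sum.inr (j - i₀), Sum.inl (qq γ' (j - i₀) v₁)),
     s(Sum.inr (j - i₀), Sum.inl (qq γ' (j - i₀) v₂)),
     s(Sum.inr (j - k), Sum.inl (qq γ' (j - k) v₃))}

private lemma mem_Eedges_iff {V : Type*} {G' : SimpleGraph V} (γ' : G' ≃g G')
    (T : Fin 3 → G'.Subgraph) (v₁ v₂ v₃ : V) (i₀ k j : Fin 3) (a b : V ⊕ Fin 3) :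
    s(a, b) ∈ Eedges γ' T v₁ v₂ v₃ i₀ k j ↔
      (∃ x y, (s(x, y) ∈ (T j).edgeSet ∧
          s(x, y) ≠ s(qq γ' (j - i₀) v₁, qq γ' (j - i₀) v₂)) ∧
          a = Sum.inl x ∧ b = Sum.inl y) ∨
        (s(a, b) = s(Sum.inr (j - i₀), Sum.inl (qq γ' (j - i₀) v₁)) ∨
         s(a, b) = s(Sum.inr (j - i₀), Sum.inl (qq γ' (j - i₀) v₂)) ∨
         s(a, b) = s(Sum.inr (j - k), Sum.inl (qq γ' (j - k) v₃))) := by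
  classical
  unfold Eedges
  rw [Set.mem_union]
  constructor
  · rintro (h | h)
    · left
      obtain ⟨x, y, hxy, rfl, rfl⟩ := mem_map_inl.mp h
      exact ⟨x, y, ⟨hxy.1, by simpa using hxy.2⟩, rfl, rfl⟩
    · right; simpa [Set.mem_insert_iff] using h
  · rintro (⟨x, y, ⟨h1, h2⟩, rfl, rfl⟩ | h)
    · exact Or.inl (mem_map_inl.mpr ⟨x, y, ⟨h1, by simpa using h2⟩, rfl, rfl⟩)
    · right; simpa [Set.mem_insert_iff] using h

set_option maxHeartbeats 1000000

open Fin.CommRing in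
/-- If `G'` (with automorphism `γ'`, `γ'³ = id`, fixing no vertex) has a `(C₃, γ')`
3Tree2 partition, `G` is a `(C₃, γ')` edge split of `G'` by new vertices `v, w, z`, and
`γ` is the automorphism of `G` restricting to `γ'` on `V(G')` and acting as the 3-cycle
`(v w z)` on the new vertices, then `G` has a `(C₃, γ)` 3Tree2 partition. -/
theorem c3_edge_split_3Tree2 {V : Type*} [Fintype V] [DecidableEq V]
    (G' : SimpleGraph V) (γ' : G' ≃g G') (hγ3 : ∀ u, γ' (γ' (γ' u)) = u)
    (hfree : ∀ u, γ' u ≠ u)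
    (T : Fin 3 → G'.Subgraph) (hT : IsC3_3Tree2Partition G' γ' T)
    (v₁ v₂ v₃ : V) (h12 : v₁ ≠ v₂) (h23 : v₂ ≠ v₃) (h13 : v₁ ≠ v₃)
    (hadj : G'.Adj v₁ v₂)
    (γ : edgeSplitGraph G' γ' v₁ v₂ v₃ ≃g edgeSplitGraph G' γ' v₁ v₂ v₃)
    (hres : ∀ x : V, γ (Sum.inl x) = Sum.inl (γ' x))
    (h0 : γ (Sum.inr 0) = Sum.inr 1) (h1 : γ (Sum.inr 1) = Sum.inr 2)
    (h2 : γ (Sum.inr 2) = Sum.inr 0) :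
    ∃ T' : Fin 3 → (edgeSplitGraph G' γ' v₁ v₂ v₃).Subgraph,
      IsC3_3Tree2Partition (edgeSplitGraph G' γ' v₁ v₂ v₃) γ T' := by
  classical
  obtain ⟨⟨htree, hpart, hvert⟩, hmap⟩ := hT
  -- basic facts about qq
  have hq0 : ∀ x, qq γ' 0 x = x := fun x => rfl
  have hq1 : ∀ x, qq γ' 1 x = γ' x := fun x => rfl
  have hq2 : ∀ x, qq γ' 2 x = γ' (γ' x) := fun x => rfl
  have hqsucc : ∀ (m : Fin 3) (x : V), qq γ' (m + 1) x = γ' (qq γ' m x) := by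
    intro m x
    fin_cases m
    · rfl
    · rfl
    · show qq γ' 0 x = γ' (qq γ' 2 x)
      rw [hq0, hq2]
      exact (hγ3 x).symm
  have hqinj : ∀ m : Fin 3, Function.Injective (qq γ' m) := by
    intro m
    fin_cases m
    · exact fun a b h => h
    · exact fun a b h => γ'.toEquiv.injective h
    · exact fun a b h => γ'.toEquiv.injective (γ'.toEquiv.injective h)
  -- one-step equivariance
  have hvert_succ : ∀ (i : Fin 3) (x : V), x ∈ (T i).verts → γ' x ∈ (T (i + 1)).verts := by
    intro i x hx
    rw [← hmap i]
    exact ⟨x, hx, rfl⟩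
  have hadj_succ : ∀ (i : Fin 3) (x y : V), (T i).Adj x y → (T (i + 1)).Adj (γ' x) (γ' y) := by
    intro i x y hxy
    rw [← hmap i]
    exact ⟨x, y, hxy, rfl, rfl⟩
  -- the tree containing the split edge
  obtain ⟨i₀, hi₀, hi₀u⟩ := hpart s(v₁, v₂) ((G'.mem_edgeSet).mpr hadj)
  have hi₀adj : (T i₀).Adj v₁ v₂ := hi₀
  have hdel : ∀ d : Fin 3, (T (i₀ + d)).Adj (qq γ' d v₁) (qq γ' d v₂) := by
    intro d
    fin_cases d
    · simpa [qq] using hi₀adj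
    · simpa [qq] using hadj_succ i₀ _ _ hi₀adj
    · have h' := hadj_succ _ _ _ (hadj_succ i₀ _ _ hi₀adj)
      have e1 : i₀ + 1 + 1 = i₀ + 2 := by ring
      rw [e1] at h'
      exact h'
  have hcontain : ∀ (d jj : Fin 3), (T jj).Adj (qq γ' d v₁) (qq γ' d v₂) → jj = i₀ + d := by
    intro d jj hj
    have hG : s(qq γ' d v₁, qq γ' d v₂) ∈ G'.edgeSet := (T jj).adj_sub hj
    exact (hpart _ hG).unique hj (hdel d)
  -- choice of k
  obtain ⟨k, hk3, hki⟩ : ∃ k, v₃ ∈ (T k).verts ∧ k ≠ i₀ := by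
    by_contra h
    push_neg at h
    have hsub : {i : Fin 3 | v₃ ∈ (T i).verts} ⊆ {i₀} := fun i hi => h i hi
    have hle := Set.ncard_le_ncard hsub (Set.finite_singleton _)
    rw [hvert v₃, Set.ncard_singleton] at hle
    omega
  have hik : i₀ ≠ k := Ne.symm hki
  have hv3 : ∀ d : Fin 3, qq γ' d v₃ ∈ (T (k + d)).verts := by
    intro d
    fin_cases d
    · simpa [qq] using hk3
    · simpa [qq] using hvert_succ k _ hk3
    · have h' := hvert_succ _ _ (hvert_succ k _ hk3)
      have e1 : k + 1 + 1 = k + 2 := by ring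
      rw [e1] at h'
      exact h'
  -- abbreviations
  have hsub1 : ∀ j : Fin 3, i₀ + (j - i₀) = j := fun j => by ring
  have hsub2 : ∀ j : Fin 3, k + (j - k) = j := fun j => by ring
  have hdelj : ∀ j : Fin 3, (T j).Adj (qq γ' (j - i₀) v₁) (qq γ' (j - i₀) v₂) := by
    intro j
    have h' := hdel (j - i₀)
    rwa [hsub1 j] at h'
  have hv3j : ∀ j : Fin 3, qq γ' (j - k) v₃ ∈ (T j).verts := by
    intro j
    have h' := hv3 (j - k)
    rwa [hsub2 j] at h'
  have hu1v : ∀ j : Fin 3, qq γ' (j - i₀) v₁ ∈ (T j).verts := fun j => (T j).edge_vert (hdelj j)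
  have hu2v : ∀ j : Fin 3, qq γ' (j - i₀) v₂ ∈ (T j).verts :=
    fun j => (T j).edge_vert ((T j).adj_symm (hdelj j))
  -- the deleted edges in the big graph
  have hq_adj : ∀ d : Fin 3, G'.Adj (qq γ' d v₁) (qq γ' d v₂) := fun d => (T _).adj_sub (hdel d)
  have hdel0 : s(v₁, v₂) = s(qq γ' 0 v₁, qq γ' 0 v₂) := rfl
  have hdel1 : s(γ' v₁, γ' v₂) = s(qq γ' 1 v₁, qq γ' 1 v₂) := rfl
  have hdel2 : s(γ' (γ' v₁), γ' (γ' v₂)) = s(qq γ' 2 v₁, qq γ' 2 v₂) := rfl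
  have hGadjnew : ∀ (m : Fin 3) (u : V),
      (u = qq γ' m v₁ ∨ u = qq γ' m v₂ ∨ u = qq γ' m v₃) →
      (edgeSplitGraph G' γ' v₁ v₂ v₃).Adj (Sum.inr m) (Sum.inl u) := by
    intro m u hu
    rw [edgeSplitGraph, SimpleGraph.fromEdgeSet_adj]
    refine ⟨Or.inr ?_, by simp⟩
    fin_cases m <;> rcases hu with rfl | rfl | rfl <;>
      simp [Set.mem_insert_iff, hq0, hq1, hq2, qq]
  -- membership of the split graph edge set
  have hbig : ∀ (j : Fin 3) (a b : V ⊕ Fin 3), s(a, b) ∈ Eedges γ' T v₁ v₂ v₃ i₀ k j →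
      (edgeSplitGraph G' γ' v₁ v₂ v₃).Adj a b := by
    intro j a b h
    rw [edgeSplitGraph, SimpleGraph.fromEdgeSet_adj]
    rcases (mem_Eedges_iff γ' T v₁ v₂ v₃ i₀ k j a b).mp h with
      ⟨x, y, ⟨hxy, hne⟩, rfl, rfl⟩ | h' | h' | h'
    · refine ⟨Or.inl (mem_map_inl.mpr ⟨x, y, ⟨(T j).edgeSet_subset hxy, ?_⟩, rfl, rfl⟩), ?_⟩
      · intro hmem
        simp only [Set.mem_insert_iff, Set.mem_singleton_iff] at hmem
        rcases hmem with h0' | h0' | h0'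
        · rw [hdel0] at h0'
          have hjj := hcontain 0 j (SimpleGraph.Subgraph.mem_edgeSet.mp (by rw [← h0']; exact hxy))
          refine hne ?_
          rw [h0', hjj]
          have e : i₀ + 0 - i₀ = (0 : Fin 3) := by ring
          rw [e]
        · rw [hdel1] at h0'
          have hjj := hcontain 1 j (SimpleGraph.Subgraph.mem_edgeSet.mp (by rw [← h0']; exact hxy))
          refine hne ?_
          rw [h0', hjj]
          have e : i₀ + 1 - i₀ = (1 : Fin 3) := by ring
          rw [e]
        · rw [hdel2] at h0'
          have hjj := hcontain 2 j (SimpleGraph.Subgraph.mem_edgeSet.mp (by rw [← h0']; exact hxy))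
          refine hne ?_
          rw [h0', hjj]
          have e : i₀ + 2 - i₀ = (2 : Fin 3) := by ring
          rw [e]
      · simp only [ne_eq, Sum.inl.injEq]
        have : G'.Adj x y := (T j).adj_sub hxy
        exact this.ne
    · rcases Sym2.eq_iff.mp h' with ⟨rfl, rfl⟩ | ⟨rfl, rfl⟩
      · exact hGadjnew _ _ (Or.inl rfl)
      · exact (hGadjnew _ _ (Or.inl rfl)).symm
    · rcases Sym2.eq_iff.mp h' with ⟨rfl, rfl⟩ | ⟨rfl, rfl⟩
      · exact hGadjnew _ _ (Or.inr (Or.inl rfl))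
      · exact (hGadjnew _ _ (Or.inr (Or.inl rfl))).symm
    · rcases Sym2.eq_iff.mp h' with ⟨rfl, rfl⟩ | ⟨rfl, rfl⟩
      · exact hGadjnew _ _ (Or.inr (Or.inr rfl))
      · exact (hGadjnew _ _ (Or.inr (Or.inr rfl))).symm
  -- the construction
  let T' : Fin 3 → (edgeSplitGraph G' γ' v₁ v₂ v₃).Subgraph := fun j =>
    { verts := Everts T i₀ k j
      Adj := fun a b => s(a, b) ∈ Eedges γ' T v₁ v₂ v₃ i₀ k j
      adj_sub := fun {a b} h => hbig j a b h
      edge_vert := by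
        intro a b h
        rcases (mem_Eedges_iff γ' T v₁ v₂ v₃ i₀ k j a b).mp h with
          ⟨x, y, ⟨hxy, _⟩, rfl, _⟩ | h' | h' | h'
        · exact Or.inl ⟨x, (T j).edge_vert hxy, rfl⟩
        · rcases Sym2.eq_iff.mp h' with ⟨rfl, -⟩ | ⟨rfl, -⟩
          · exact Or.inr (Set.mem_insert _ _)
          · exact Or.inl ⟨_, hu1v j, rfl⟩
        · rcases Sym2.eq_iff.mp h' with ⟨rfl, -⟩ | ⟨rfl, -⟩
          · exact Or.inr (Set.mem_insert _ _)
          · exact Or.inl ⟨_, hu2v j, rfl⟩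
        · rcases Sym2.eq_iff.mp h' with ⟨rfl, -⟩ | ⟨rfl, -⟩
          · exact Or.inr (Set.mem_insert_of_mem _ rfl)
          · exact Or.inl ⟨_, hv3j j, rfl⟩
      symm := ⟨by
        intro a b h
        show s(b, a) ∈ _
        rw [Sym2.eq_swap]
        exact h⟩ }
  have hT'adj : ∀ (j : Fin 3) (a b : V ⊕ Fin 3),
      (T' j).Adj a b ↔ s(a, b) ∈ Eedges γ' T v₁ v₂ v₃ i₀ k j := fun _ _ _ => Iff.rfl
  have hT'verts : ∀ j, (T' j).verts = Everts T i₀ k j := fun _ => rfl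
  have hadj_n1u1 : ∀ j, (T' j).Adj (Sum.inr (j - i₀)) (Sum.inl (qq γ' (j - i₀) v₁)) :=
    fun j => (mem_Eedges_iff γ' T v₁ v₂ v₃ i₀ k j _ _).mpr (Or.inr (Or.inl rfl))
  have hadj_n1u2 : ∀ j, (T' j).Adj (Sum.inr (j - i₀)) (Sum.inl (qq γ' (j - i₀) v₂)) :=
    fun j => (mem_Eedges_iff γ' T v₁ v₂ v₃ i₀ k j _ _).mpr (Or.inr (Or.inr (Or.inl rfl)))
  have hadj_n2t3 : ∀ j, (T' j).Adj (Sum.inr (j - k)) (Sum.inl (qq γ' (j - k) v₃)) :=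
    fun j => (mem_Eedges_iff γ' T v₁ v₂ v₃ i₀ k j _ _).mpr (Or.inr (Or.inr (Or.inr rfl)))
  have hadj_old : ∀ (j : Fin 3) (x y : V), (T j).Adj x y →
      s(x, y) ≠ s(qq γ' (j - i₀) v₁, qq γ' (j - i₀) v₂) →
      (T' j).Adj (Sum.inl x) (Sum.inl y) :=
    fun j x y h1 h2 =>
      (mem_Eedges_iff γ' T v₁ v₂ v₃ i₀ k j _ _).mpr (Or.inl ⟨x, y, ⟨h1, h2⟩, rfl, rfl⟩)
  have hsubne : ∀ j : Fin 3, j - i₀ ≠ j - k := by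
    intro j h
    exact hik (by have := sub_right_injective h; exact this.symm ▸ rfl)
  -- case eliminator for edges of T'
  have hadjcases : ∀ (j : Fin 3) (c d : V ⊕ Fin 3), s(c, d) ∈ Eedges γ' T v₁ v₂ v₃ i₀ k j →
      (∃ x y, (T j).Adj x y ∧ s(x, y) ≠ s(qq γ' (j - i₀) v₁, qq γ' (j - i₀) v₂) ∧
        c = Sum.inl x ∧ d = Sum.inl y) ∨
      ((c = Sum.inr (j - i₀) ∧ d = Sum.inl (qq γ' (j - i₀) v₁)) ∨
       (d = Sum.inr (j - i₀) ∧ c = Sum.inl (qq γ' (j - i₀) v₁))) ∨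
      ((c = Sum.inr (j - i₀) ∧ d = Sum.inl (qq γ' (j - i₀) v₂)) ∨
       (d = Sum.inr (j - i₀) ∧ c = Sum.inl (qq γ' (j - i₀) v₂))) ∨
      ((c = Sum.inr (j - k) ∧ d = Sum.inl (qq γ' (j - k) v₃)) ∨
       (d = Sum.inr (j - k) ∧ c = Sum.inl (qq γ' (j - k) v₃))) := by
    intro j c d h
    rcases (mem_Eedges_iff γ' T v₁ v₂ v₃ i₀ k j c d).mp h with
      ⟨x, y, ⟨h1, h2⟩, rfl, rfl⟩ | h' | h' | h'
    · exact Or.inl ⟨x, y, h1, h2, rfl, rfl⟩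
    · rcases Sym2.eq_iff.mp h' with ⟨ha, hb⟩ | ⟨ha, hb⟩
      · exact Or.inr (Or.inl (Or.inl ⟨ha, hb⟩))
      · exact Or.inr (Or.inl (Or.inr ⟨hb, ha⟩))
    · rcases Sym2.eq_iff.mp h' with ⟨ha, hb⟩ | ⟨ha, hb⟩
      · exact Or.inr (Or.inr (Or.inl (Or.inl ⟨ha, hb⟩)))
      · exact Or.inr (Or.inr (Or.inl (Or.inr ⟨hb, ha⟩)))
    · rcases Sym2.eq_iff.mp h' with ⟨ha, hb⟩ | ⟨ha, hb⟩
      · exact Or.inr (Or.inr (Or.inr (Or.inl ⟨ha, hb⟩)))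
      · exact Or.inr (Or.inr (Or.inr (Or.inr ⟨hb, ha⟩)))
  -- unique containers for the new edges
  have hEx1 : ∀ m : Fin 3, ∃! i : Fin 3, (T' i).Adj (Sum.inr m) (Sum.inl (qq γ' m v₁)) := by
    intro m
    refine ⟨i₀ + m, ?_, ?_⟩
    · have e : i₀ + m - i₀ = m := by ring
      have h' := hadj_n1u1 (i₀ + m)
      rwa [e] at h'
    · intro i' h'
      rcases hadjcases i' _ _ h' with ⟨x', y', h1, h2, hc, hd⟩ | hcase | hcase | hcase
      · exact absurd hc (by simp)
      · rcases hcase with ⟨hc, hd⟩ | ⟨hc, hd⟩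
        · have hm : m = i' - i₀ := Sum.inr.inj hc
          rw [hm]; ring
        · exact absurd hc (by simp)
      · rcases hcase with ⟨hc, hd⟩ | ⟨hc, hd⟩
        · have hm : m = i' - i₀ := Sum.inr.inj hc
          have hu : qq γ' m v₁ = qq γ' (i' - i₀) v₂ := Sum.inl.inj hd
          rw [← hm] at hu
          exact absurd (hqinj m hu) h12
        · exact absurd hc (by simp)
      · rcases hcase with ⟨hc, hd⟩ | ⟨hc, hd⟩
        · have hm : m = i' - k := Sum.inr.inj hc
          have hu : qq γ' m v₁ = qq γ' (i' - k) v₃ := Sum.inl.inj hd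
          rw [← hm] at hu
          exact absurd (hqinj m hu) h13
        · exact absurd hc (by simp)
  have hEx2 : ∀ m : Fin 3, ∃! i : Fin 3, (T' i).Adj (Sum.inr m) (Sum.inl (qq γ' m v₂)) := by
    intro m
    refine ⟨i₀ + m, ?_, ?_⟩
    · have e : i₀ + m - i₀ = m := by ring
      have h' := hadj_n1u2 (i₀ + m)
      rwa [e] at h'
    · intro i' h'
      rcases hadjcases i' _ _ h' with ⟨x', y', h1, h2, hc, hd⟩ | hcase | hcase | hcase
      · exact absurd hc (by simp)
      · rcases hcase with ⟨hc, hd⟩ | ⟨hc, hd⟩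
        · have hm : m = i' - i₀ := Sum.inr.inj hc
          have hu : qq γ' m v₂ = qq γ' (i' - i₀) v₁ := Sum.inl.inj hd
          rw [← hm] at hu
          exact absurd (hqinj m hu) h12.symm
        · exact absurd hc (by simp)
      · rcases hcase with ⟨hc, hd⟩ | ⟨hc, hd⟩
        · have hm : m = i' - i₀ := Sum.inr.inj hc
          rw [hm]; ring
        · exact absurd hc (by simp)
      · rcases hcase with ⟨hc, hd⟩ | ⟨hc, hd⟩
        · have hm : m = i' - k := Sum.inr.inj hc
          have hu : qq γ' m v₂ = qq γ' (i' - k) v₃ := Sum.inl.inj hd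
          rw [← hm] at hu
          exact absurd (hqinj m hu) h23
        · exact absurd hc (by simp)
  have hEx3 : ∀ m : Fin 3, ∃! i : Fin 3, (T' i).Adj (Sum.inr m) (Sum.inl (qq γ' m v₃)) := by
    intro m
    refine ⟨k + m, ?_, ?_⟩
    · have e : k + m - k = m := by ring
      have h' := hadj_n2t3 (k + m)
      rwa [e] at h'
    · intro i' h'
      rcases hadjcases i' _ _ h' with ⟨x', y', h1, h2, hc, hd⟩ | hcase | hcase | hcase
      · exact absurd hc (by simp)
      · rcases hcase with ⟨hc, hd⟩ | ⟨hc, hd⟩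
        · have hm : m = i' - i₀ := Sum.inr.inj hc
          have hu : qq γ' m v₃ = qq γ' (i' - i₀) v₁ := Sum.inl.inj hd
          rw [← hm] at hu
          exact absurd (hqinj m hu) h13.symm
        · exact absurd hc (by simp)
      · rcases hcase with ⟨hc, hd⟩ | ⟨hc, hd⟩
        · have hm : m = i' - i₀ := Sum.inr.inj hc
          have hu : qq γ' m v₃ = qq γ' (i' - i₀) v₂ := Sum.inl.inj hd
          rw [← hm] at hu
          exact absurd (hqinj m hu) h23.symm
        · exact absurd hc (by simp)
      · rcases hcase with ⟨hc, hd⟩ | ⟨hc, hd⟩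
        · have hm : m = i' - k := Sum.inr.inj hc
          rw [hm]; ring
        · exact absurd hc (by simp)
  refine ⟨T', ⟨⟨?_, ?_, ?_⟩, ?_⟩⟩
  · -- each T' j is a tree
    intro j
    have hu1mem : Sum.inl (qq γ' (j - i₀) v₁) ∈ (T' j).verts := Or.inl ⟨_, hu1v j, rfl⟩
    have hu2mem : Sum.inl (qq γ' (j - i₀) v₂) ∈ (T' j).verts := Or.inl ⟨_, hu2v j, rfl⟩
    have ht3mem : Sum.inl (qq γ' (j - k) v₃) ∈ (T' j).verts := Or.inl ⟨_, hv3j j, rfl⟩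
    have hn1mem : Sum.inr (j - i₀) ∈ (T' j).verts := Or.inr (Set.mem_insert _ _)
    have hn2mem : Sum.inr (j - k) ∈ (T' j).verts := Or.inr (Set.mem_insert_of_mem _ rfl)
    have hco : ∀ (a b : V ⊕ Fin 3) (ha : a ∈ (T' j).verts) (hb : b ∈ (T' j).verts),
        (T' j).Adj a b → (T' j).coe.Reachable ⟨a, ha⟩ ⟨b, hb⟩ := by
      intro a b ha hb h
      refine SimpleGraph.Adj.reachable ?_
      rw [SimpleGraph.Subgraph.coe_adj]
      exact h
    have key : ∀ (x : V) (hx : x ∈ (T j).verts),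
        (T' j).coe.Reachable ⟨Sum.inl x, Or.inl ⟨x, hx, rfl⟩⟩
          ⟨Sum.inl (qq γ' (j - i₀) v₁), hu1mem⟩ := by
      intro x hx
      have hreach : (T j).coe.Reachable ⟨x, hx⟩ ⟨qq γ' (j - i₀) v₁, hu1v j⟩ :=
        (htree j).isConnected.preconnected _ _
      refine reach_map (A := (T j).coe) (B := (T' j).coe)
        (fun c => ⟨Sum.inl c.1, Or.inl ⟨c.1, c.2, rfl⟩⟩) ?_ hreach
      rintro ⟨c, hcm⟩ ⟨d, hdm⟩ hcd
      rw [SimpleGraph.Subgraph.coe_adj] at hcd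
      by_cases hce : s(c, d) = s(qq γ' (j - i₀) v₁, qq γ' (j - i₀) v₂)
      · rcases Sym2.eq_iff.mp hce with ⟨rfl, rfl⟩ | ⟨rfl, rfl⟩
        · exact (hco _ _ _ hn1mem ((T' j).adj_symm (hadj_n1u1 j))).trans
            (hco _ _ hn1mem _ (hadj_n1u2 j))
        · exact (hco _ _ _ hn1mem ((T' j).adj_symm (hadj_n1u2 j))).trans
            (hco _ _ hn1mem _ (hadj_n1u1 j))
      · exact hco _ _ _ _ (hadj_old j c d hcd hce)
    have toBase : ∀ (c : V ⊕ Fin 3) (hc : c ∈ (T' j).verts),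
        (T' j).coe.Reachable ⟨c, hc⟩ ⟨Sum.inl (qq γ' (j - i₀) v₁), hu1mem⟩ := by
      intro c hc
      rcases hc with ⟨x, hx, rfl⟩ | hc'
      · exact key x hx
      · have hc'' := hc'
        simp only [Set.mem_insert_iff, Set.mem_singleton_iff] at hc''
        rcases hc'' with rfl | rfl
        · exact hco _ _ _ hu1mem (hadj_n1u1 j)
        · exact (hco _ _ _ ht3mem (hadj_n2t3 j)).trans (key _ (hv3j j))
    refine ⟨?_, ?_⟩
    · -- connected
      rw [SimpleGraph.connected_iff]
      refine ⟨?_, ⟨⟨Sum.inl (qq γ' (j - i₀) v₁), hu1mem⟩⟩⟩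
      rintro ⟨c, hc⟩ ⟨d, hd⟩
      exact (toBase c hc).trans (toBase d hd).symm
    · -- acyclic
      have hTacyc : (T j).coe.IsAcyclic := ((SimpleGraph.isTree_iff _).mp (htree j)).2
      have hTbridge : ∀ (x y : V) (hx : x ∈ (T j).verts) (hy : y ∈ (T j).verts),
          (T j).Adj x y →
          ¬((T j).coe \ SimpleGraph.fromEdgeSet {s(⟨x, hx⟩, ⟨y, hy⟩)}).Reachable
            ⟨x, hx⟩ ⟨y, hy⟩ := by
        intro x y hx hy hxy
        have hcoadj : (T j).coe.Adj ⟨x, hx⟩ ⟨y, hy⟩ := by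
          rw [SimpleGraph.Subgraph.coe_adj]; exact hxy
        exact (SimpleGraph.isBridge_iff.mp
          ((SimpleGraph.isAcyclic_iff_forall_adj_isBridge.mp hTacyc) hcoadj))
      -- the two pushforward maps
      have hmemTj : ∀ (uS : V), uS ∈ (T j).verts → ∀ (c : V ⊕ Fin 3), c ∈ (T' j).verts →
          Sum.elim id (fun m => if m = j - i₀ then uS else qq γ' (j - k) v₃) c ∈
            (T j).verts := by
        intro uS huS c hc
        rcases c with x | m
        · rcases hc with ⟨x', hx', hee⟩ | hc
          · obtain rfl := Sum.inl.inj hee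
            exact hx'
          · simp only [Set.mem_insert_iff, Set.mem_singleton_iff] at hc
            rcases hc with h | h <;> exact absurd h (by simp)
        · rw [Sum.elim_inr]
          split_ifs
          · exact huS
          · exact hv3j j
      let F1 : ↥(T' j).verts → ↥(T j).verts := fun c =>
        ⟨Sum.elim id (fun m => if m = j - i₀ then qq γ' (j - i₀) v₁ else qq γ' (j - k) v₃) c.1,
         hmemTj _ (hu1v j) c.1 c.2⟩
      let F2 : ↥(T' j).verts → ↥(T j).verts := fun c =>
        ⟨Sum.elim id (fun m => if m = j - i₀ then qq γ' (j - i₀) v₂ else qq γ' (j - k) v₃) c.1,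
         hmemTj _ (hu2v j) c.1 c.2⟩
      have hF1inl : ∀ (c : ↥(T' j).verts) (x : V), c.1 = Sum.inl x → (F1 c).1 = x := by
        intro c x h
        show Sum.elim id _ c.1 = x
        rw [h, Sum.elim_inl, id]
      have hF2inl : ∀ (c : ↥(T' j).verts) (x : V), c.1 = Sum.inl x → (F2 c).1 = x := by
        intro c x h
        show Sum.elim id _ c.1 = x
        rw [h, Sum.elim_inl, id]
      have hF1n1 : ∀ (c : ↥(T' j).verts), c.1 = Sum.inr (j - i₀) →
          (F1 c).1 = qq γ' (j - i₀) v₁ := by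
        intro c h
        show Sum.elim id _ c.1 = _
        rw [h, Sum.elim_inr, if_pos rfl]
      have hF2n1 : ∀ (c : ↥(T' j).verts), c.1 = Sum.inr (j - i₀) →
          (F2 c).1 = qq γ' (j - i₀) v₂ := by
        intro c h
        show Sum.elim id _ c.1 = _
        rw [h, Sum.elim_inr, if_pos rfl]
      have hF1n2 : ∀ (c : ↥(T' j).verts), c.1 = Sum.inr (j - k) →
          (F1 c).1 = qq γ' (j - k) v₃ := by
        intro c h
        show Sum.elim id _ c.1 = _
        rw [h, Sum.elim_inr, if_neg (fun hh => hsubne j hh.symm)]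
      have hF2n2 : ∀ (c : ↥(T' j).verts), c.1 = Sum.inr (j - k) →
          (F2 c).1 = qq γ' (j - k) v₃ := by
        intro c h
        show Sum.elim id _ c.1 = _
        rw [h, Sum.elim_inr, if_neg (fun hh => hsubne j hh.symm)]
      rw [SimpleGraph.isAcyclic_iff_forall_adj_isBridge]
      intro a b hab
      have habsub : (T' j).Adj a.1 b.1 := by
        rw [SimpleGraph.Subgraph.coe_adj] at hab
        exact hab
      refine SimpleGraph.isBridge_iff.mpr ?_
      intro hr
      rcases hadjcases j a.1 b.1 habsub with ⟨x, y, hxyT, hxyne, hax, hby⟩ | hcase | hcase | hcase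
      · -- deleted edge is an old tree edge
        have hx : x ∈ (T j).verts := (T j).edge_vert hxyT
        have hy : y ∈ (T j).verts := (T j).edge_vert ((T j).adj_symm hxyT)
        have hstep : ∀ c d : ↥(T' j).verts,
            ((T' j).coe \ SimpleGraph.fromEdgeSet {s(a, b)}).Adj c d →
            ((T j).coe \ SimpleGraph.fromEdgeSet {s(⟨x, hx⟩, ⟨y, hy⟩)}).Reachable
              (F1 c) (F1 d) := by
          intro c d hcd
          rw [SimpleGraph.sdiff_adj, SimpleGraph.fromEdgeSet_adj] at hcd
          obtain ⟨hcd1, hcd2⟩ := hcd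
          have hcdadj : (T' j).Adj c.1 d.1 := by
            rw [SimpleGraph.Subgraph.coe_adj] at hcd1
            exact hcd1
          have hcdne : s(c, d) ≠ s(a, b) := by
            intro hh
            exact hcd2 ⟨Set.mem_singleton_iff.mpr hh, hcd1.ne⟩
          rcases hadjcases j c.1 d.1 hcdadj with ⟨x', y', h1, h2, hc, hd⟩ | hc2 | hc2 | hc2
          · have hx' : x' ∈ (T j).verts := (T j).edge_vert h1
            have hy' : y' ∈ (T j).verts := (T j).edge_vert ((T j).adj_symm h1)
            refine SimpleGraph.Adj.reachable ?_
            rw [SimpleGraph.sdiff_adj, SimpleGraph.fromEdgeSet_adj]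
            constructor
            · rw [SimpleGraph.Subgraph.coe_adj, hF1inl c x' hc, hF1inl d y' hd]
              exact h1
            · rintro ⟨hmem, -⟩
              rw [Set.mem_singleton_iff] at hmem
              apply hcdne
              apply subtype_sym2_eq
              have hval := congrArg (Sym2.map Subtype.val) hmem
              rw [Sym2.map_pair_eq, Sym2.map_pair_eq] at hval
              rw [hF1inl c x' hc, hF1inl d y' hd] at hval
              have hval2 := congrArg (Sym2.map (Sum.inl : V → V ⊕ Fin 3)) hval
              rw [Sym2.map_pair_eq, Sym2.map_pair_eq] at hval2
              rw [hc, hd, hax, hby]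
              exact hval2
          · have heq : F1 c = F1 d := by
              apply Subtype.ext
              rcases hc2 with ⟨hc, hd⟩ | ⟨hd, hc⟩
              · rw [hF1n1 c hc, hF1inl d _ hd]
              · rw [hF1inl c _ hc, hF1n1 d hd]
            rw [heq]
          · refine SimpleGraph.Adj.reachable ?_
            rw [SimpleGraph.sdiff_adj, SimpleGraph.fromEdgeSet_adj]
            refine ⟨?_, ?_⟩
            · rw [SimpleGraph.Subgraph.coe_adj]
              rcases hc2 with ⟨hc, hd⟩ | ⟨hd, hc⟩
              · rw [hF1n1 c hc, hF1inl d _ hd]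
                exact hdelj j
              · rw [hF1inl c _ hc, hF1n1 d hd]
                exact (T j).adj_symm (hdelj j)
            · rintro ⟨hmem, -⟩
              rw [Set.mem_singleton_iff] at hmem
              have hval := congrArg (Sym2.map Subtype.val) hmem
              rw [Sym2.map_pair_eq, Sym2.map_pair_eq] at hval
              apply hxyne
              rcases hc2 with ⟨hc, hd⟩ | ⟨hd, hc⟩
              · rw [hF1n1 c hc, hF1inl d _ hd] at hval
                exact hval.symm
              · rw [hF1inl c _ hc, hF1n1 d hd] at hval
                rw [← hval]
                exact Sym2.eq_swap
          · have heq : F1 c = F1 d := by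
              apply Subtype.ext
              rcases hc2 with ⟨hc, hd⟩ | ⟨hd, hc⟩
              · rw [hF1n2 c hc, hF1inl d _ hd]
              · rw [hF1inl c _ hc, hF1n2 d hd]
            rw [heq]
        have hre := reach_map F1 hstep hr
        have hFa : F1 a = ⟨x, hx⟩ := Subtype.ext (hF1inl a x hax)
        have hFb : F1 b = ⟨y, hy⟩ := Subtype.ext (hF1inl b y hby)
        rw [hFa, hFb] at hre
        exact hTbridge x y hx hy hxyT hre
      · -- deleted edge is the n1-u1 edge: push forward with F2
        have hstep : ∀ c d : ↥(T' j).verts,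
            ((T' j).coe \ SimpleGraph.fromEdgeSet {s(a, b)}).Adj c d →
            ((T j).coe \ SimpleGraph.fromEdgeSet
              {s(⟨qq γ' (j - i₀) v₁, hu1v j⟩, ⟨qq γ' (j - i₀) v₂, hu2v j⟩)}).Reachable
              (F2 c) (F2 d) := by
          intro c d hcd
          rw [SimpleGraph.sdiff_adj, SimpleGraph.fromEdgeSet_adj] at hcd
          obtain ⟨hcd1, hcd2⟩ := hcd
          have hcdadj : (T' j).Adj c.1 d.1 := by
            rw [SimpleGraph.Subgraph.coe_adj] at hcd1
            exact hcd1
          have hcdne : s(c, d) ≠ s(a, b) := by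
            intro hh
            exact hcd2 ⟨Set.mem_singleton_iff.mpr hh, hcd1.ne⟩
          rcases hadjcases j c.1 d.1 hcdadj with ⟨x', y', h1, h2, hc, hd⟩ | hc2 | hc2 | hc2
          · have hx' : x' ∈ (T j).verts := (T j).edge_vert h1
            have hy' : y' ∈ (T j).verts := (T j).edge_vert ((T j).adj_symm h1)
            refine SimpleGraph.Adj.reachable ?_
            rw [SimpleGraph.sdiff_adj, SimpleGraph.fromEdgeSet_adj]
            constructor
            · rw [SimpleGraph.Subgraph.coe_adj, hF2inl c x' hc, hF2inl d y' hd]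
              exact h1
            · rintro ⟨hmem, -⟩
              rw [Set.mem_singleton_iff] at hmem
              apply h2
              have hval := congrArg (Sym2.map Subtype.val) hmem
              rw [Sym2.map_pair_eq, Sym2.map_pair_eq] at hval
              rw [hF2inl c x' hc, hF2inl d y' hd] at hval
              exact hval
          · -- this is exactly the deleted edge upstairs
            exfalso
            apply hcdne
            apply subtype_sym2_eq
            have h₂ : s(a.1, b.1) = s(Sum.inr (j - i₀), Sum.inl (qq γ' (j - i₀) v₁)) := by
              rcases hcase with ⟨ha', hb'⟩ | ⟨hb', ha'⟩
              · rw [ha', hb']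
              · rw [ha', hb']
                exact Sym2.eq_swap
            have h₁ : s(c.1, d.1) = s(Sum.inr (j - i₀), Sum.inl (qq γ' (j - i₀) v₁)) := by
              rcases hc2 with ⟨hc, hd⟩ | ⟨hd, hc⟩
              · rw [hc, hd]
              · rw [hc, hd]
                exact Sym2.eq_swap
            rw [h₁, h₂]
          · -- n1-u2 edge maps to the identity at u2
            have heq : F2 c = F2 d := by
              apply Subtype.ext
              rcases hc2 with ⟨hc, hd⟩ | ⟨hd, hc⟩
              · rw [hF2n1 c hc, hF2inl d _ hd]
              · rw [hF2inl c _ hc, hF2n1 d hd]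
            rw [heq]
          · have heq : F2 c = F2 d := by
              apply Subtype.ext
              rcases hc2 with ⟨hc, hd⟩ | ⟨hd, hc⟩
              · rw [hF2n2 c hc, hF2inl d _ hd]
              · rw [hF2inl c _ hc, hF2n2 d hd]
            rw [heq]
        have hre := reach_map F2 hstep hr
        have hbr := hTbridge _ _ (hu1v j) (hu2v j) (hdelj j)
        rcases hcase with ⟨ha', hb'⟩ | ⟨hb', ha'⟩
        · have hFa : F2 a = ⟨qq γ' (j - i₀) v₂, hu2v j⟩ := Subtype.ext (hF2n1 a ha')
          have hFb : F2 b = ⟨qq γ' (j - i₀) v₁, hu1v j⟩ := Subtype.ext (hF2inl b _ hb')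
          rw [hFa, hFb] at hre
          exact hbr hre.symm
        · have hFa : F2 a = ⟨qq γ' (j - i₀) v₁, hu1v j⟩ := Subtype.ext (hF2inl a _ ha')
          have hFb : F2 b = ⟨qq γ' (j - i₀) v₂, hu2v j⟩ := Subtype.ext (hF2n1 b hb')
          rw [hFa, hFb] at hre
          exact hbr hre
      · -- deleted edge is the n1-u2 edge: push forward with F1
        have hstep : ∀ c d : ↥(T' j).verts,
            ((T' j).coe \ SimpleGraph.fromEdgeSet {s(a, b)}).Adj c d →
            ((T j).coe \ SimpleGraph.fromEdgeSet
              {s(⟨qq γ' (j - i₀) v₁, hu1v j⟩, ⟨qq γ' (j - i₀) v₂, hu2v j⟩)}).Reachable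
              (F1 c) (F1 d) := by
          intro c d hcd
          rw [SimpleGraph.sdiff_adj, SimpleGraph.fromEdgeSet_adj] at hcd
          obtain ⟨hcd1, hcd2⟩ := hcd
          have hcdadj : (T' j).Adj c.1 d.1 := by
            rw [SimpleGraph.Subgraph.coe_adj] at hcd1
            exact hcd1
          have hcdne : s(c, d) ≠ s(a, b) := by
            intro hh
            exact hcd2 ⟨Set.mem_singleton_iff.mpr hh, hcd1.ne⟩
          rcases hadjcases j c.1 d.1 hcdadj with ⟨x', y', h1, h2, hc, hd⟩ | hc2 | hc2 | hc2
          · have hx' : x' ∈ (T j).verts := (T j).edge_vert h1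
            have hy' : y' ∈ (T j).verts := (T j).edge_vert ((T j).adj_symm h1)
            refine SimpleGraph.Adj.reachable ?_
            rw [SimpleGraph.sdiff_adj, SimpleGraph.fromEdgeSet_adj]
            constructor
            · rw [SimpleGraph.Subgraph.coe_adj, hF1inl c x' hc, hF1inl d y' hd]
              exact h1
            · rintro ⟨hmem, -⟩
              rw [Set.mem_singleton_iff] at hmem
              apply h2
              have hval := congrArg (Sym2.map Subtype.val) hmem
              rw [Sym2.map_pair_eq, Sym2.map_pair_eq] at hval
              rw [hF1inl c x' hc, hF1inl d y' hd] at hval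
              exact hval
          · have heq : F1 c = F1 d := by
              apply Subtype.ext
              rcases hc2 with ⟨hc, hd⟩ | ⟨hd, hc⟩
              · rw [hF1n1 c hc, hF1inl d _ hd]
              · rw [hF1inl c _ hc, hF1n1 d hd]
            rw [heq]
          · -- this is exactly the deleted edge upstairs
            exfalso
            apply hcdne
            apply subtype_sym2_eq
            have h₂ : s(a.1, b.1) = s(Sum.inr (j - i₀), Sum.inl (qq γ' (j - i₀) v₂)) := by
              rcases hcase with ⟨ha', hb'⟩ | ⟨hb', ha'⟩
              · rw [ha', hb']
              · rw [ha', hb']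
                exact Sym2.eq_swap
            have h₁ : s(c.1, d.1) = s(Sum.inr (j - i₀), Sum.inl (qq γ' (j - i₀) v₂)) := by
              rcases hc2 with ⟨hc, hd⟩ | ⟨hd, hc⟩
              · rw [hc, hd]
              · rw [hc, hd]
                exact Sym2.eq_swap
            rw [h₁, h₂]
          · have heq : F1 c = F1 d := by
              apply Subtype.ext
              rcases hc2 with ⟨hc, hd⟩ | ⟨hd, hc⟩
              · rw [hF1n2 c hc, hF1inl d _ hd]
              · rw [hF1inl c _ hc, hF1n2 d hd]
            rw [heq]
        have hre := reach_map F1 hstep hr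
        have hbr := hTbridge _ _ (hu1v j) (hu2v j) (hdelj j)
        rcases hcase with ⟨ha', hb'⟩ | ⟨hb', ha'⟩
        · have hFa : F1 a = ⟨qq γ' (j - i₀) v₁, hu1v j⟩ := Subtype.ext (hF1n1 a ha')
          have hFb : F1 b = ⟨qq γ' (j - i₀) v₂, hu2v j⟩ := Subtype.ext (hF1inl b _ hb')
          rw [hFa, hFb] at hre
          exact hbr hre
        · have hFa : F1 a = ⟨qq γ' (j - i₀) v₂, hu2v j⟩ := Subtype.ext (hF1inl a _ ha')
          have hFb : F1 b = ⟨qq γ' (j - i₀) v₁, hu1v j⟩ := Subtype.ext (hF1n1 b hb')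
          rw [hFa, hFb] at hre
          exact hbr hre.symm
      · -- deleted edge is the pendant edge
        have core : ∀ (aa bb : ↥(T' j).verts), aa.1 = Sum.inr (j - k) →
            bb.1 = Sum.inl (qq γ' (j - k) v₃) →
            ((T' j).coe \ SimpleGraph.fromEdgeSet {s(aa, bb)}).Reachable aa bb → False := by
          intro aa bb ha' hb' hrr
          obtain ⟨w⟩ := hrr
          cases w with
          | nil => exact absurd (ha'.symm.trans hb') (by simp)
          | @cons _ c' _ hadj' w' =>
            rw [SimpleGraph.sdiff_adj, SimpleGraph.fromEdgeSet_adj] at hadj'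
            obtain ⟨h1', h2'⟩ := hadj'
            have hcadj : (T' j).Adj aa.1 c'.1 := by
              rw [SimpleGraph.Subgraph.coe_adj] at h1'
              exact h1'
            rcases hadjcases j aa.1 c'.1 hcadj with ⟨x', y', h1, h2, hax', -⟩ | hc2 | hc2 | hc2
            · exact absurd (ha'.symm.trans hax') (by simp)
            · rcases hc2 with ⟨hc, -⟩ | ⟨-, hc⟩
              · exact hsubne j (Sum.inr.inj (ha'.symm.trans hc)).symm
              · exact absurd (ha'.symm.trans hc) (by simp)
            · rcases hc2 with ⟨hc, -⟩ | ⟨-, hc⟩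
              · exact hsubne j (Sum.inr.inj (ha'.symm.trans hc)).symm
              · exact absurd (ha'.symm.trans hc) (by simp)
            · rcases hc2 with ⟨-, hd⟩ | ⟨-, hd⟩
              · have hcb : c' = bb := Subtype.ext (hd.trans hb'.symm)
                apply h2'
                refine ⟨Set.mem_singleton_iff.mpr ?_, ?_⟩
                · rw [hcb]
                · intro hac
                  rw [hac] at ha'
                  exact absurd (ha'.symm.trans hd) (by simp)
              · exact absurd (ha'.symm.trans hd) (by simp)
        rcases hcase with ⟨ha', hb'⟩ | ⟨hb', ha'⟩
        · exact core a b ha' hb' hr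
        · have hswap : s(a, b) = s(b, a) := Sym2.eq_swap
          rw [hswap] at hr
          exact core b a hb' ha' hr.symm
  · -- edge partition
    intro e he
    induction e using Sym2.ind with
    | _ a b =>
    rw [SimpleGraph.mem_edgeSet, edgeSplitGraph, SimpleGraph.fromEdgeSet_adj] at he
    obtain ⟨hmem, hnab⟩ := he
    rcases hmem with hold | hnew
    · obtain ⟨x, y, ⟨hxyG, hxyD⟩, rfl, rfl⟩ := mem_map_inl.mp hold
      obtain ⟨i, hi, hiu⟩ := hpart s(x, y) hxyG
      have hnotdel : s(x, y) ≠ s(qq γ' (i - i₀) v₁, qq γ' (i - i₀) v₂) := by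
        intro hc
        apply hxyD
        rw [hc]
        have htri : ∀ d : Fin 3, s(qq γ' d v₁, qq γ' d v₂) ∈
            ({s(v₁, v₂), s(γ' v₁, γ' v₂), s(γ' (γ' v₁), γ' (γ' v₂))} : Set (Sym2 V)) := by
          intro d
          fin_cases d
          · exact Or.inl rfl
          · exact Or.inr (Or.inl rfl)
          · exact Or.inr (Or.inr rfl)
        exact htri _
      refine ⟨i, SimpleGraph.Subgraph.mem_edgeSet.mpr (hadj_old i x y hi hnotdel), ?_⟩
      intro i' hi'
      rcases hadjcases i' _ _ (SimpleGraph.Subgraph.mem_edgeSet.mp hi') with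
        ⟨x', y', h1, h2, hc, hd⟩ | hcase | hcase | hcase
      · obtain rfl := Sum.inl.inj hc
        obtain rfl := Sum.inl.inj hd
        exact hiu i' h1
      · rcases hcase with ⟨hc, -⟩ | ⟨hc, -⟩
        · exact absurd hc (by simp)
        · exact absurd hc (by simp)
      · rcases hcase with ⟨hc, -⟩ | ⟨hc, -⟩
        · exact absurd hc (by simp)
        · exact absurd hc (by simp)
      · rcases hcase with ⟨hc, -⟩ | ⟨hc, -⟩
        · exact absurd hc (by simp)
        · exact absurd hc (by simp)
    · simp only [Set.mem_insert_iff, Set.mem_singleton_iff] at hnew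
      rcases hnew with h | h | h | h | h | h | h | h | h
      · rw [h]; exact hEx1 0
      · rw [h]; exact hEx2 0
      · rw [h]; exact hEx3 0
      · rw [h]; exact hEx1 1
      · rw [h]; exact hEx2 1
      · rw [h]; exact hEx3 1
      · rw [h]; exact hEx1 2
      · rw [h]; exact hEx2 2
      · rw [h]; exact hEx3 2
  · -- vertex count
    intro a
    rcases a with x | m
    · have hset : {i : Fin 3 | Sum.inl x ∈ (T' i).verts} = {i : Fin 3 | x ∈ (T i).verts} := by
        ext i
        simp only [Set.mem_setOf_eq, hT'verts, Everts, Set.mem_union, Set.mem_image,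
          Set.mem_insert_iff, Set.mem_singleton_iff, Sum.inl.injEq]
        constructor
        · rintro (⟨x', hx', rfl⟩ | h | h)
          · exact hx'
          · exact absurd h (by simp)
          · exact absurd h (by simp)
        · intro hx
          exact Or.inl ⟨x, hx, rfl⟩
      rw [hset]
      exact hvert x
    · have hset : {i : Fin 3 | Sum.inr m ∈ (T' i).verts} = {i₀ + m, k + m} := by
        ext i
        simp only [Set.mem_setOf_eq, hT'verts, Everts, Set.mem_union, Set.mem_image,
          Set.mem_insert_iff, Set.mem_singleton_iff, Sum.inr.injEq]
        constructor
        · rintro (⟨x', -, hx'⟩ | h | h)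
          · exact absurd hx' (by simp)
          · left; rw [h]; ring
          · right; rw [h]; ring
        · rintro (rfl | rfl)
          · right; left; ring
          · right; right; ring
      rw [hset]
      exact Set.ncard_pair (fun h => hik (add_right_cancel h))
  · -- equivariance
    have hγinr : ∀ m : Fin 3, γ (Sum.inr m) = Sum.inr (m + 1) := by
      intro m
      fin_cases m
      · exact h0
      · exact h1
      · exact h2
    have hγ3' : ∀ c : V ⊕ Fin 3, γ (γ (γ c)) = c := by
      rintro (x | m)
      · rw [hres, hres, hres, hγ3]
      · rw [hγinr, hγinr, hγinr]
        congr 1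
        have h3 : (3 : Fin 3) = 0 := rfl
        calc m + 1 + 1 + 1 = m + 3 := by ring
          _ = m := by rw [h3, add_zero]
    have hMle : ∀ j, (T' j).map γ.toHom ≤ T' (j + 1) := by
      intro j
      constructor
      · rintro c ⟨c', hc', rfl⟩
        rcases hc' with ⟨x, hx, rfl⟩ | hc'
        · refine Or.inl ⟨γ' x, hvert_succ j x hx, ?_⟩
          exact (hres x).symm
        · simp only [Set.mem_insert_iff, Set.mem_singleton_iff] at hc'
          rcases hc' with rfl | rfl
          · refine Or.inr ?_
            show γ (Sum.inr (j - i₀)) ∈ _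
            rw [hγinr]
            have e : j - i₀ + 1 = (j + 1) - i₀ := by ring
            rw [e]
            exact Set.mem_insert _ _
          · refine Or.inr ?_
            show γ (Sum.inr (j - k)) ∈ _
            rw [hγinr]
            have e : j - k + 1 = (j + 1) - k := by ring
            rw [e]
            exact Set.mem_insert_of_mem _ rfl
      · rintro a b ⟨c, d, hcd, rfl, rfl⟩
        show s(γ c, γ d) ∈ _
        rcases hadjcases j c d hcd with ⟨x, y, h1, h2, rfl, rfl⟩ | hcase | hcase | hcase
        · refine (mem_Eedges_iff γ' T v₁ v₂ v₃ i₀ k (j + 1) _ _).mpr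
            (Or.inl ⟨γ' x, γ' y, ⟨hadj_succ j x y h1, ?_⟩, by rw [hres], by rw [hres]⟩)
          intro hcq
          apply h2
          have e : (j + 1) - i₀ = (j - i₀) + 1 := by ring
          rw [e, hqsucc, hqsucc] at hcq
          exact sym2_congr_inj γ'.toEquiv.injective hcq
        · have hkey : s(γ (Sum.inr (j - i₀)), γ (Sum.inl (qq γ' (j - i₀) v₁))) =
              s(Sum.inr ((j + 1) - i₀), Sum.inl (qq γ' ((j + 1) - i₀) v₁)) := by
            rw [hγinr, hres, ← hqsucc]
            have e : j - i₀ + 1 = (j + 1) - i₀ := by ring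
            rw [e]
          rcases hcase with ⟨rfl, rfl⟩ | ⟨rfl, rfl⟩
          · exact (mem_Eedges_iff γ' T v₁ v₂ v₃ i₀ k (j + 1) _ _).mpr (Or.inr (Or.inl hkey))
          · rw [Sym2.eq_swap]
            exact (mem_Eedges_iff γ' T v₁ v₂ v₃ i₀ k (j + 1) _ _).mpr (Or.inr (Or.inl hkey))
        · have hkey : s(γ (Sum.inr (j - i₀)), γ (Sum.inl (qq γ' (j - i₀) v₂))) =
              s(Sum.inr ((j + 1) - i₀), Sum.inl (qq γ' ((j + 1) - i₀) v₂)) := by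
            rw [hγinr, hres, ← hqsucc]
            have e : j - i₀ + 1 = (j + 1) - i₀ := by ring
            rw [e]
          rcases hcase with ⟨rfl, rfl⟩ | ⟨rfl, rfl⟩
          · exact (mem_Eedges_iff γ' T v₁ v₂ v₃ i₀ k (j + 1) _ _).mpr
              (Or.inr (Or.inr (Or.inl hkey)))
          · rw [Sym2.eq_swap]
            exact (mem_Eedges_iff γ' T v₁ v₂ v₃ i₀ k (j + 1) _ _).mpr
              (Or.inr (Or.inr (Or.inl hkey)))
        · have hkey : s(γ (Sum.inr (j - k)), γ (Sum.inl (qq γ' (j - k) v₃))) =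
              s(Sum.inr ((j + 1) - k), Sum.inl (qq γ' ((j + 1) - k) v₃)) := by
            rw [hγinr, hres, ← hqsucc]
            have e : j - k + 1 = (j + 1) - k := by ring
            rw [e]
          rcases hcase with ⟨rfl, rfl⟩ | ⟨rfl, rfl⟩
          · exact (mem_Eedges_iff γ' T v₁ v₂ v₃ i₀ k (j + 1) _ _).mpr
              (Or.inr (Or.inr (Or.inr hkey)))
          · rw [Sym2.eq_swap]
            exact (mem_Eedges_iff γ' T v₁ v₂ v₃ i₀ k (j + 1) _ _).mpr
              (Or.inr (Or.inr (Or.inr hkey)))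
    have hmapid : ∀ H : (edgeSplitGraph G' γ' v₁ v₂ v₃).Subgraph,
        ((H.map γ.toHom).map γ.toHom).map γ.toHom = H := by
      intro H
      rw [← SimpleGraph.Subgraph.map_comp, ← SimpleGraph.Subgraph.map_comp]
      have hcomp : (γ.toHom.comp γ.toHom).comp γ.toHom = SimpleGraph.Hom.id :=
        DFunLike.ext _ _ (fun c => hγ3' c)
      rw [hcomp, SimpleGraph.Subgraph.map_id]
    have hp3 : ∀ i : Fin 3, i + 3 = i := by
      intro i
      have h3 : (3 : Fin 3) = 0 := rfl
      rw [h3, add_zero]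
    have key : ∀ i, (T' (i + 2)).map γ.toHom = T' i := by
      intro i
      have hchain1 : T' i ≤ ((T' (i + 1)).map γ.toHom).map γ.toHom := by
        calc T' i = (((T' i).map γ.toHom).map γ.toHom).map γ.toHom := (hmapid (T' i)).symm
          _ ≤ ((T' (i + 1)).map γ.toHom).map γ.toHom :=
            SimpleGraph.Subgraph.map_mono (SimpleGraph.Subgraph.map_mono (hMle i))
      have hchain2 : ((T' (i + 1)).map γ.toHom).map γ.toHom ≤ (T' (i + 2)).map γ.toHom := by
        apply SimpleGraph.Subgraph.map_mono
        have h' := hMle (i + 1)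
        rwa [show i + 1 + 1 = i + 2 by ring] at h'
      have hchain3 : (T' (i + 2)).map γ.toHom ≤ T' i := by
        have h' := hMle (i + 2)
        rwa [show i + 2 + 1 = i from by rw [show i + 2 + 1 = i + 3 by ring, hp3]] at h'
      exact le_antisymm hchain3 (hchain1.trans hchain2)
    intro i
    have h' := key (i + 1)
    rwa [show i + 1 + 2 = i from by rw [show i + 1 + 2 = i + 3 by ring, hp3]] at h'

end C3Laman
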